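/- Define g(F) = (F² + (1/9)(1 − F)²) / (F² + (2/3)F(1 − F) + (5/9)(1 − F)²) and let g^{∘L} denote its L-fold iterate. Then for every F with 1/2 < F < 1 and every threshold F^{th} < 1, there exists an integer L ≥ 0 such that g^{∘L}(F) ≥ F^{th}; that is, iterated BBPSSW purification of Werner states drives the fidelity arbitrarily close to 1. -/
import Mathlib


/-- The BBPSSW output fidelity map for Werner input states:
`g(F) = (F² + (1/9)(1 - F)²) / (F² + (2/3)F(1 - F) + (5/9)(1 - F)²)`. -/
noncomputable def bbpsswFid (F : ℝ) : ℝ :=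
  (F ^ 2 + (1 / 9) * (1 - F) ^ 2) /
    (F ^ 2 + (2 / 3) * F * (1 - F) + (5 / 9) * (1 - F) ^ 2)

private lemma bb_denom_pos (x : ℝ) : 0 < 8*x^2 - 4*x + 5 := by
  nlinarith [sq_nonneg (4*x - 1)]

private lemma bb_gdenom_pos (x : ℝ) :
    0 < x ^ 2 + (2 / 3) * x * (1 - x) + (5 / 9) * (1 - x) ^ 2 := by
  nlinarith [sq_nonneg (4*x - 1)]

private lemma bb_one_sub (x : ℝ) :
    1 - bbpsswFid x = (1 - x) * (4 + 2*x) / (8*x^2 - 4*x + 5) := by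
  have h := bb_gdenom_pos x
  have h2 := bb_denom_pos x
  have hg : bbpsswFid x = (9*x^2 + (1 - x)^2) / (8*x^2 - 4*x + 5) := by
    rw [bbpsswFid, div_eq_div_iff h.ne' h2.ne']
    ring
  rw [hg, eq_div_iff h2.ne', sub_mul, one_mul, div_mul_cancel₀ _ h2.ne']
  ring

private lemma bb_step (F x : ℝ) (hF : 1/2 < F) (hx : F ≤ x) (hx1 : x ≤ 1) :
    x ≤ bbpsswFid x ∧ bbpsswFid x ≤ 1 ∧
      1 - bbpsswFid x ≤ ((4 + 2*F) / (8*F^2 - 4*F + 5)) * (1 - x) := by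
  have hDx := bb_denom_pos x
  have hDF := bb_denom_pos F
  have hx2 : (1 : ℝ)/2 < x := lt_of_lt_of_le hF hx
  have hrx_le : (4 + 2*x) / (8*x^2 - 4*x + 5) ≤ (4 + 2*F) / (8*F^2 - 4*F + 5) := by
    rw [div_le_div_iff₀ hDx hDF]
    nlinarith [mul_nonneg (sub_nonneg.2 hx)
      (by nlinarith : (0:ℝ) ≤ 32*(x+F) - 26 + 16*F*x)]
  have hc1 : (4 + 2*F) / (8*F^2 - 4*F + 5) < 1 := by
    rw [div_lt_one hDF]
    nlinarith [mul_pos (by linarith : (0:ℝ) < 2*F - 1) (by linarith : (0:ℝ) < 4*F - 1)]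
  have heq := bb_one_sub x
  have h1x : (0:ℝ) ≤ 1 - x := by linarith
  have hrx_nonneg : (0:ℝ) ≤ (4 + 2*x) / (8*x^2 - 4*x + 5) :=
    div_nonneg (by linarith) hDx.le
  have key : 1 - bbpsswFid x ≤ ((4 + 2*F) / (8*F^2 - 4*F + 5)) * (1 - x) := by
    rw [heq, mul_div_assoc, mul_comm]
    exact mul_le_mul_of_nonneg_right hrx_le h1x
  refine ⟨?_, ?_, key⟩
  · nlinarith [key, hc1]
  · have : (0:ℝ) ≤ 1 - bbpsswFid x := by
      rw [heq]
      exact div_nonneg (mul_nonneg h1x (by linarith)) hDx.le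
    linarith

/-- Iterated BBPSSW purification of Werner states drives the fidelity arbitrarily close
to `1`: for every `1/2 < F < 1` and every threshold `Fth < 1`, finitely many rounds `L`
suffice to reach `g^[L] F ≥ Fth`. -/
theorem bbpsswFid_iterate_reaches_threshold
    (F : ℝ) (h1 : 1 / 2 < F) (h2 : F < 1) (Fth : ℝ) (hFth : Fth < 1) :
    ∃ L : ℕ, Fth ≤ bbpsswFid^[L] F := by
  set c : ℝ := (4 + 2*F) / (8*F^2 - 4*F + 5) with hc
  have hDF := bb_denom_pos F
  have hc0 : 0 ≤ c := div_nonneg (by linarith) hDF.le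
  have hc1 : c < 1 := by
    rw [hc, div_lt_one hDF]
    nlinarith [mul_pos (by linarith : (0:ℝ) < 2*F - 1) (by linarith : (0:ℝ) < 4*F - 1)]
  have main : ∀ L : ℕ, F ≤ bbpsswFid^[L] F ∧ bbpsswFid^[L] F ≤ 1 ∧
      1 - bbpsswFid^[L] F ≤ c ^ L * (1 - F) := by
    intro L
    induction L with
    | zero => exact ⟨le_rfl, h2.le, by simp⟩
    | succ n ih =>
      obtain ⟨hF, h1', hcon⟩ := ih
      obtain ⟨s1, s2, s3⟩ := bb_step F (bbpsswFid^[n] F) h1 hF h1'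
      rw [Function.iterate_succ_apply']
      refine ⟨le_trans hF s1, s2, ?_⟩
      calc 1 - bbpsswFid (bbpsswFid^[n] F) ≤ c * (1 - bbpsswFid^[n] F) := s3
        _ ≤ c * (c ^ n * (1 - F)) := mul_le_mul_of_nonneg_left hcon hc0
        _ = c ^ (n+1) * (1 - F) := by ring
  have hε : 0 < (1 - Fth) / (1 - F) := div_pos (by linarith) (by linarith)
  obtain ⟨L, hL⟩ := exists_pow_lt_of_lt_one hε hc1
  refine ⟨L, ?_⟩
  obtain ⟨_, _, hcon⟩ := main L
  have : c ^ L * (1 - F) < 1 - Fth := by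
    rw [lt_div_iff₀ (by linarith : (0:ℝ) < 1 - F)] at hL
    exact hL
  linarith
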